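/- arXiv:1307.1589 — 11 statements merged into one kernel-verified Lean document; each statement's English description precedes it below -/
import Mathlib

section
/- If a finite word w of length n has a point of symmetry at a (i.e., w_{a-i mod n} = w_i for all 0 ≤ i ≤ n-1), then w = pq for some palindromes p and q with |p| = a+1. Conversely, if w = pq with p, q palindromes and |p| = a+1, then w has a point of symmetry at a. -/
/-- A word `w` of length `n` has a point of symmetry at `a` if
`w_{(a-i) mod n} = w_i` for all `0 ≤ i ≤ n-1`. -/
def PointOfSymmetry {A : Type} [Inhabited A] (w : List A) (a : ℕ) : Prop :=
  ∀ i < w.length,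
    w.getD ((((a : ℤ) - (i : ℤ)) % (w.length : ℤ)).toNat) default = w.getD i default

lemma emod_shift_aux (x n : ℤ) : (x + n) % n = x % n := by
  have := Int.add_mul_emod_self_left (a := x) (b := n) (c := 1)
  simpa using this

lemma palindrome_getElem_aux {A : Type} (l : List A) (hl : l.reverse = l)
    (i : ℕ) (h : i < l.length) : l[i] = l[l.length - 1 - i]'(by omega) :=
  (List.getElem_of_eq hl.symm h).trans (List.getElem_reverse _)

/-- A word `w` has a point of symmetry at `a` iff `w = pq` for palindromes `p`, `q`
with `|p| = a + 1`. -/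
theorem point_of_symmetry_iff_product_of_palindromes
    {A : Type} [Inhabited A] (w : List A) (a : ℕ) (ha : a < w.length) :
    PointOfSymmetry w a ↔
      ∃ p q : List A, p.reverse = p ∧ q.reverse = q ∧ w = p ++ q ∧ p.length = a + 1 := by
  constructor
  · intro h
    -- restate the symmetry in getElem form
    have hsym : ∀ i : ℕ, ∀ hi : i < w.length, ∀ j : ℕ, ∀ hj : j < w.length,
        (j : ℤ) = ((a : ℤ) - i) % w.length → w[j] = w[i] := by
      intro i hi j hj hij
      have := h i hi
      have hj' : (((a : ℤ) - (i : ℤ)) % (w.length : ℤ)).toNat = j := by omega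
      rw [hj', List.getD_eq_getElem _ _ hj, List.getD_eq_getElem _ _ hi] at this
      exact this
    refine ⟨w.take (a+1), w.drop (a+1), ?_, ?_, (List.take_append_drop _ _).symm, by
      simp only [List.length_take]; omega⟩
    · apply List.ext_getElem (by simp)
      intro i h1 h2
      have hl : (w.take (a+1)).length = a + 1 := by simp; omega
      rw [List.getElem_reverse, List.getElem_take, List.getElem_take]
      have h2' : i < a + 1 := hl ▸ h2
      apply hsym i (by omega) _ (by simp at h1 ⊢; omega)
      have h3 : (w.take (a+1)).length - 1 - i = a - i := by omega
      rw [h3]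
      have h4 : ((a : ℤ) - i) % w.length = (a : ℤ) - i :=
        Int.emod_eq_of_lt (by omega) (by omega)
      rw [h4]; omega
    · apply List.ext_getElem (by simp)
      intro j h1 h2
      have hl : (w.drop (a+1)).length = w.length - (a+1) := by simp
      rw [List.getElem_reverse, List.getElem_drop, List.getElem_drop]
      have h2' : j < w.length - (a+1) := hl ▸ h2
      apply hsym ((a+1) + j) (by omega) _ (by omega)
      have h3 : (a + 1) + ((w.drop (a+1)).length - 1 - j) = w.length - 1 - j := by omega
      rw [h3]
      have h4 : ((a : ℤ) - ((a+1+j : ℕ) : ℤ)) % w.length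
          = (((a : ℤ) - ((a+1+j : ℕ) : ℤ)) + w.length) % w.length :=
        (emod_shift_aux _ _).symm
      have h5 : (((a : ℤ) - ((a+1+j : ℕ) : ℤ)) + w.length) % w.length
          = ((a : ℤ) - ((a+1+j : ℕ) : ℤ)) + w.length :=
        Int.emod_eq_of_lt (by push_cast; omega) (by push_cast; omega)
      have : (a : ℤ) - ((a+1+j : ℕ) : ℤ) = (a : ℤ) - ((a : ℤ)+1+j) := by push_cast; ring
      rw [h4, h5]
      push_cast
      omega
  · rintro ⟨p, q, hp, hq, rfl, hpl⟩
    intro i hi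
    set n := (p ++ q).length with hn
    have hnl : n = p.length + q.length := by simp [hn]
    rw [List.getD_eq_getElem _ _ hi]
    by_cases hia : i ≤ a
    · have hj : (((a : ℤ) - i) % n).toNat = a - i := by
        have : ((a : ℤ) - i) % n = (a : ℤ) - i :=
          Int.emod_eq_of_lt (by omega) (by omega)
        omega
      rw [hj]
      have hai : a - i < (p ++ q).length := by omega
      rw [List.getD_eq_getElem _ _ hai]
      rw [List.getElem_append_left (show a - i < p.length by omega),
          List.getElem_append_left (show i < p.length by omega)]
      rw [palindrome_getElem_aux p hp i (by omega)]
      congr 1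
      omega
    · have hj : (((a : ℤ) - i) % n).toNat = n + a - i := by
        have e1 : ((a : ℤ) - i) % n = (((a : ℤ) - i) + n) % n := (emod_shift_aux _ _).symm
        have e2 : (((a : ℤ) - i) + n) % n = ((a : ℤ) - i) + n :=
          Int.emod_eq_of_lt (by omega) (by omega)
        rw [e1, e2]; omega
      rw [hj]
      have hai : n + a - i < (p ++ q).length := by omega
      rw [List.getD_eq_getElem _ _ hai]
      rw [List.getElem_append_right (show p.length ≤ n + a - i by omega),
          List.getElem_append_right (show p.length ≤ i by omega)]
      rw [palindrome_getElem_aux q hq (i - p.length) (by omega)]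
      congr 1
      omega
end

section
/- Let w and w' be conjugate finite words with uw = w'u for some word u. If w has a point of symmetry at a, then w' has a point of symmetry at (a + 2|u|) mod |w|. -/
/-- If `w` and `w'` are conjugate via `u ++ w = w' ++ u` and `w` has a point of symmetry
at `a`, then `w'` has a point of symmetry at `(a + 2|u|) mod |w|`. -/
theorem point_of_symmetry_of_conjugate
    {A : Type} [Inhabited A] (w w' u : List A) (a : ℕ)
    (hconj : u ++ w = w' ++ u) (h : PointOfSymmetry w a) :
    PointOfSymmetry w' ((a + 2 * u.length) % w.length) := by
  set n := w.length with hn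
  set m := u.length with hm
  have hlen : w'.length = n := by
    have := congrArg List.length hconj
    simp only [List.length_append] at this
    omega
  rcases Nat.eq_zero_or_pos n with h0 | hpos
  · intro i hi; rw [hlen, h0] at hi; omega
  have hnz : (n : ℤ) ≠ 0 := by exact_mod_cast Nat.pos_iff_ne_zero.mp hpos
  have hnpos : (0 : ℤ) < n := by exact_mod_cast hpos
  -- one-step periodicity of s = u ++ w
  have step : ∀ i, i < m → (u ++ w).getD i default = (u ++ w).getD (i + n) default := by
    intro i hi
    have h1 : (u ++ w).getD i default = u.getD i default :=
      List.getD_append _ _ _ _ (by omega)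
    have h2 : (u ++ w).getD (i + n) default = u.getD i default := by
      rw [hconj, List.getD_append_right _ _ _ _ (by omega)]
      congr 1; omega
    rw [h1, h2]
  -- q-step periodicity
  have per : ∀ q i, i + q * n < m + n →
      (u ++ w).getD i default = (u ++ w).getD (i + q * n) default := by
    intro q
    induction q with
    | zero => intro i _; simp
    | succ q ih =>
      intro i hq
      have hqn : (q + 1) * n = q * n + n := by ring
      have hi : i < m := by omega
      rw [step i hi]
      have := ih (i + n) (by omega)
      rw [this]; congr 1; omega
  -- rotation relation
  have key : ∀ j, j < n → w'.getD j default
      = w.getD ((((j : ℤ) - m) % n).toNat) default := by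
    intro j hj
    set k := (((j : ℤ) - m) % n).toNat with hk
    have hk1 : (k : ℤ) = ((j : ℤ) - m) % n :=
      Int.toNat_of_nonneg (Int.emod_nonneg _ hnz)
    have hkn : k < n := by
      have := Int.emod_lt_of_pos ((j : ℤ) - m) hnpos
      omega
    have hmod : ((k : ℤ) + m) % n = j % n := by
      conv_rhs => rw [show (j : ℤ) = ((j : ℤ) - m) + m by ring]
      rw [Int.add_emod, hk1, Int.emod_emod_of_dvd _ dvd_rfl, ← Int.add_emod]
    have hjn : (j : ℤ) % n = j := Int.emod_eq_of_lt (by positivity) (by exact_mod_cast hj)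
    have hdvd : (n : ℤ) ∣ ((k : ℤ) + m) - j :=
      Int.dvd_self_sub_of_emod_eq (by rw [hmod, hjn])
    obtain ⟨q, hq⟩ := hdvd
    have hq0 : 0 ≤ q := by nlinarith
    obtain ⟨q', rfl⟩ := Int.eq_ofNat_of_zero_le hq0
    have hnat : k + m = j + q' * n := by
      have : (k : ℤ) + m = (j : ℤ) + q' * n := by push_cast at hq ⊢; linarith
      exact_mod_cast this
    have h1 : w'.getD j default = (u ++ w).getD j default := by
      rw [hconj]; exact (List.getD_append _ _ _ _ (by omega)).symm
    have h2 : w.getD k default = (u ++ w).getD (m + k) default := by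
      rw [List.getD_append_right _ _ _ _ (by omega)]
      congr 1; omega
    rw [h1, h2, per q' j (by omega)]
    congr 1; omega
  -- main proof
  intro j hj
  rw [hlen] at hj
  set a' := (a + 2 * m) % n with ha'
  have ha'c : ((a' : ℕ) : ℤ) = ((a : ℤ) + 2 * m) % n := by
    rw [ha']; push_cast; ring_nf
  set t := ((((a' : ℕ) : ℤ) - j) % (w'.length : ℤ)).toNat with ht
  have hwl : (w'.length : ℤ) = n := by exact_mod_cast hlen
  have ht1 : (t : ℤ) = (((a' : ℕ) : ℤ) - j) % n := by
    rw [ht, hwl]; exact Int.toNat_of_nonneg (Int.emod_nonneg _ hnz)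
  have htn : t < n := by
    have := Int.emod_lt_of_pos (((a' : ℕ) : ℤ) - j) hnpos
    omega
  rw [key t htn, key j hj]
  set i := (((j : ℤ) - m) % n).toNat with hi
  have hi1 : (i : ℤ) = ((j : ℤ) - m) % n :=
    Int.toNat_of_nonneg (Int.emod_nonneg _ hnz)
  have hin : i < n := by
    have := Int.emod_lt_of_pos ((j : ℤ) - m) hnpos
    omega
  have hsym := h i (by omega)
  rw [show w.length = n from rfl] at hsym
  rw [← hsym]
  congr 2
  calc ((t : ℤ) - m) % n
      = ((((a' : ℕ) : ℤ) - j) % n - m) % n := by rw [ht1]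
    _ = (((a' : ℕ) : ℤ) - j - m) % n := by
        rw [Int.sub_emod, Int.emod_emod_of_dvd _ dvd_rfl, ← Int.sub_emod]
    _ = ((((a : ℤ) + 2 * m) % n) - j - m) % n := by rw [ha'c]
    _ = ((a : ℤ) + 2 * m - j - m) % n := by
        rw [show ((a:ℤ) + 2*m) % n - j - m = ((a:ℤ)+2*m) % n - (j + m) by ring,
            Int.sub_emod, Int.emod_emod_of_dvd _ dvd_rfl, ← Int.sub_emod]
        congr 1; ring
    _ = ((a : ℤ) - (((j : ℤ) - m) % n)) % n := by
        rw [Int.sub_emod ((a:ℤ)) _, Int.emod_emod_of_dvd _ dvd_rfl, ← Int.sub_emod]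
        congr 1; ring
    _ = ((a : ℤ) - i) % n := by rw [hi1]
end

section
/- If a finite word w has two distinct points of symmetry a and b, then gcd(b-a, |w|) is a period of w; in particular, w is not primitive. -/
/-- `p` is a period of `w`: `p < |w|` and `w_i = w_{i+p}` for all `i < |w| - p`. -/
def IsPeriod {A : Type} [Inhabited A] (w : List A) (p : ℕ) : Prop :=
  p < w.length ∧ ∀ i, i + p < w.length → w.getD i default = w.getD (i + p) default

/-- A word is primitive if it is not a power `u^p` with `p ≥ 2`. -/
def Primitive {A : Type} (w : List A) : Prop :=
  ¬ ∃ (u : List A) (p : ℕ), 2 ≤ p ∧ w = (List.replicate p u).flatten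

/-!
Read `w` cyclically, as a function `ℤ → A` of period `|w|`. A point of symmetry `a` says this
function is invariant under the reflection `i ↦ a - i`; composing the reflections at `a` and `b`
gives the translation by `b - a`, so the function also has period `b - a`, hence, by Bézout,
period `g = gcd(b - a, |w|)`. As `g` divides `|w|` and `g ≤ b - a < |w|`, the word is the
`|w|/g`-th power of its prefix of length `g`, with `|w|/g ≥ 2`.
-/

open Function

theorem Function.periodic_sub_of_reflections {α β : Type*} [AddCommGroup α] {f : α → β}
    {a b : α} (ha : ∀ x, f (a - x) = f x) (hb : ∀ x, f (b - x) = f x) :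
    Periodic f (b - a) := fun x => by
  rw [← ha x, ← hb (a - x)]
  congr 1
  abel

theorem Function.Periodic.nat_gcd {β : Type*} {f : ℤ → β} {c d : ℕ}
    (hc : Periodic f c) (hd : Periodic f d) : Periodic f (Nat.gcd c d) := by
  rw [← Int.gcd_natCast_natCast, Int.gcd_eq_gcd_ab, mul_comm, mul_comm (d : ℤ)]
  exact (hc.int_mul _).add_period (hd.int_mul _)

namespace List

variable {A : Type} [Inhabited A]

/-- The bi-infinite word `⋯ w w w ⋯`, with `w_i` at position `i` for `0 ≤ i < |w|`. -/
def cyclic (w : List A) (i : ℤ) : A :=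
  w.getD ((i % (w.length : ℤ)).toNat) default

theorem cyclic_natCast {w : List A} {i : ℕ} (hi : i < w.length) :
    w.cyclic i = w.getD i default := by
  rw [cyclic, Int.emod_eq_of_lt (by positivity) (by exact_mod_cast hi), Int.toNat_natCast]

theorem periodic_cyclic (w : List A) : Periodic w.cyclic w.length := fun i => by
  simp only [cyclic, Int.add_emod_right]

theorem cyclic_emod (w : List A) (i : ℤ) : w.cyclic (i % w.length) = w.cyclic i := by
  simp only [cyclic, Int.emod_emod]

theorem eq_flatten_replicate_take {w : List A} {p k : ℕ}
    (h : ∀ i, i + p < w.length → w.getD i default = w.getD (i + p) default)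
    (hk : w.length = k * p) : w = (replicate k (w.take p)).flatten := by
  induction k generalizing w with
  | zero => simpa using hk
  | succ k ih =>
    rw [add_one_mul] at hk
    have hdrop : w.drop p = (replicate k ((w.drop p).take p)).flatten := by
      refine ih (fun i hi => ?_) (by rw [length_drop, hk, Nat.add_sub_cancel])
      simp only [getD_eq_getElem?_getD, getElem?_drop] at h ⊢
      rw [← add_assoc]
      exact h _ (by simp only [length_drop] at hi; omega)
    obtain rfl | hk0 := eq_or_ne k 0
    · rw [zero_add, replicate_one, flatten_singleton, take_of_length_le (by omega)]
    have hpk : p ≤ k * p := Nat.le_mul_of_pos_left p (Nat.pos_of_ne_zero hk0)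
    have htake : (w.drop p).take p = w.take p := by
      apply ext_getElem (by simp only [length_take, length_drop]; omega)
      intro i hi _
      simp only [length_take, length_drop] at hi
      rw [getElem_take, getElem_drop, getElem_take, ← getD_eq_getElem _ default,
        ← getD_eq_getElem _ default, add_comm, h i (by omega)]
    rw [replicate_succ, flatten_cons, ← htake, ← hdrop, htake, take_append_drop]

end List

open List

theorem PointOfSymmetry.cyclic_sub {A : Type} [Inhabited A] {w : List A} {a : ℕ}
    (h : PointOfSymmetry w a) (i : ℤ) : w.cyclic (a - i) = w.cyclic i := by
  obtain rfl | hw := eq_or_ne w []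
  · simp [cyclic]
  have hn : (0 : ℤ) < w.length := by simpa [length_pos_iff] using hw
  obtain ⟨j, hj⟩ : ∃ j : ℕ, (j : ℤ) = i % w.length :=
    ⟨_, Int.toNat_of_nonneg (Int.emod_nonneg i hn.ne')⟩
  have hjn : j < w.length := by
    have := Int.emod_lt_of_pos i hn
    omega
  have hshift : ((a : ℤ) - j) % w.length = (a - i) % w.length := by
    rw [hj, Int.sub_emod, Int.emod_emod, ← Int.sub_emod]
  calc w.cyclic (a - i) = w.cyclic (a - j) := by rw [← cyclic_emod, ← hshift, cyclic_emod]
    _ = w.getD j default := h j hjn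
    _ = w.cyclic i := by rw [← cyclic_natCast hjn, hj, cyclic_emod]

theorem isPeriod_of_periodic_cyclic {A : Type} [Inhabited A] {w : List A} {p : ℕ}
    (hp : p < w.length) (h : Periodic w.cyclic p) : IsPeriod w p :=
  ⟨hp, fun i hi => by rw [← cyclic_natCast (by omega), ← cyclic_natCast hi, Nat.cast_add, h]⟩

theorem IsPeriod.not_primitive {A : Type} [Inhabited A] {w : List A} {p : ℕ}
    (h : IsPeriod w p) (hdvd : p ∣ w.length) : ¬ Primitive w := by
  obtain ⟨k, hk⟩ := hdvd
  have hk2 : 2 ≤ k := Nat.lt_of_mul_lt_mul_left (a := p) (by rw [mul_one, ← hk]; exact h.1)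
  exact fun hprim => hprim ⟨w.take p, k, hk2, eq_flatten_replicate_take h.2 (by rw [hk, mul_comm])⟩

/-- If `w` has two distinct points of symmetry `a < b`, then `gcd(b - a, |w|)` is a
period of `w`; in particular `w` is not primitive. -/
theorem two_points_of_symmetry {A : Type} [Inhabited A] (w : List A) (a b : ℕ)
    (hab : a < b) (hb : b < w.length)
    (hA : PointOfSymmetry w a) (hB : PointOfSymmetry w b) :
    IsPeriod w (Nat.gcd (b - a) w.length) ∧ ¬ Primitive w := by
  have hba : Periodic w.cyclic ((b - a : ℕ) : ℤ) := by
    rw [Nat.cast_sub hab.le]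
    exact periodic_sub_of_reflections hA.cyclic_sub hB.cyclic_sub
  have hgcd : Nat.gcd (b - a) w.length < w.length :=
    (Nat.gcd_le_left _ (by omega)).trans_lt (by omega)
  have hper : IsPeriod w (Nat.gcd (b - a) w.length) :=
    isPeriod_of_periodic_cyclic hgcd (hba.nat_gcd (periodic_cyclic w))
  exact ⟨hper, hper.not_primitive (Nat.gcd_dvd_right _ _)⟩
end

section
/- (Fine and Wilf) If a finite word w has periods p and q and |w| ≥ p + q - gcd(p,q), then gcd(p,q) is also a period of w. -/
/-- A function with "period" `s` up to bound `n` is determined by residues mod `s`. -/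
lemma mod_chain {A : Type} (f : ℕ → A) (s n : ℕ) (hs : 0 < s)
    (h : ∀ i, i + s < n → f i = f (i + s)) :
    ∀ j, j < n → f j = f (j % s) := by
  intro j
  induction j using Nat.strong_induction_on with
  | _ j ih =>
    intro hj
    rcases lt_or_ge j s with hjs | hjs
    · rw [Nat.mod_eq_of_lt hjs]
    · have h1 : (j - s) + s = j := Nat.sub_add_cancel hjs
      have h2 : f (j - s) = f j := by
        have := h (j - s) (by omega)
        rwa [h1] at this
      have h3 : j - s < j := by omega
      have h4 := ih (j - s) h3 (by omega)
      rw [← h2, h4]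
      congr 1
      conv_rhs => rw [← h1]
      rw [Nat.add_mod_right]

/-- Extension: if `f` has period `p` up to `n`, `g ∣ p`, and `f` has period `g`
up to `m` with `p ≤ m ≤ n`, then `f` has period `g` up to `n`. -/
lemma ext_period {A : Type} (f : ℕ → A) (n m p g : ℕ) (hg : g ∣ p) (hgpos : 0 < g)
    (hppos : 0 < p) (hpm : p ≤ m) (hmn : m ≤ n)
    (hp : ∀ i, i + p < n → f i = f (i + p))
    (hpref : ∀ i, i + g < m → f i = f (i + g)) :
    ∀ i, i + g < n → f i = f (i + g) := by
  have hmodp := mod_chain f p n hppos hp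
  have hmodg := mod_chain f g m hgpos hpref
  intro i hi
  have h1 : f i = f (i % p) := hmodp i (by omega)
  have h2 : f (i + g) = f ((i + g) % p) := hmodp (i + g) hi
  have h3 : f (i % p) = f (i % p % g) := hmodg (i % p) (by
    have := Nat.mod_lt i hppos; omega)
  have h4 : f ((i + g) % p) = f ((i + g) % p % g) := hmodg ((i + g) % p) (by
    have := Nat.mod_lt (i + g) hppos; omega)
  rw [h1, h2, h3, h4, Nat.mod_mod_of_dvd _ hg, Nat.mod_mod_of_dvd _ hg,
    Nat.add_mod_right]

/-- Core of Fine and Wilf for functions, by strong induction on `p + q`. -/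
lemma fw_core {A : Type} : ∀ N p q (f : ℕ → A) (n : ℕ), p + q ≤ N → 0 < p → p ≤ q →
    (∀ i, i + p < n → f i = f (i + p)) →
    (∀ i, i + q < n → f i = f (i + q)) →
    p + q - Nat.gcd p q ≤ n →
    ∀ i, i + Nat.gcd p q < n → f i = f (i + Nat.gcd p q) := by
  intro N
  induction N with
  | zero => intro p q f n hN hp0 _ _ _ _ _ _; omega
  | succ N ih =>
    intro p q f n hN hp0 hpq hp hq hlen i hi
    rcases eq_or_lt_of_le hpq with rfl | hlt
    · rw [Nat.gcd_self] at hi ⊢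
      exact hp i hi
    · -- p < q
      set r := q - p with hr
      have hrpos : 0 < r := by omega
      have hgcd : Nat.gcd p r = Nat.gcd p q := by
        rw [hr, Nat.gcd_sub_self_right (le_of_lt hlt)]
      set g := Nat.gcd p q with hgdef
      have hgdvdp : g ∣ p := Nat.gcd_dvd_left p q
      have hgdvdq : g ∣ q := Nat.gcd_dvd_right p q
      have hgpos : 0 < g := Nat.gcd_pos_of_pos_left q hp0
      have hgle : g ≤ p := Nat.le_of_dvd hp0 hgdvdp
      have hgdvdr : g ∣ r := by
        rw [hr]; exact Nat.dvd_sub hgdvdq hgdvdp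
      have hrg : g ≤ r := Nat.le_of_dvd hrpos hgdvdr
      set m := n - p with hm
      -- period r up to m
      have hrper : ∀ j, j + r < m → f j = f (j + r) := by
        intro j hj
        have hjq : j + q < n := by omega
        have e1 : f j = f (j + q) := hq j hjq
        have e2 : f (j + r) = f (j + r + p) := hp (j + r) (by omega)
        have e3 : j + r + p = j + q := by omega
        rw [e1, e2, e3]
      have hpper : ∀ j, j + p < m → f j = f (j + p) := fun j hj => hp j (by omega)
      -- apply IH with (min p r, max p r)
      have hpref : ∀ j, j + g < m → f j = f (j + g) := by
        rcases le_or_gt p r with hc | hc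
        · have H := ih p r f m (by omega) hp0 hc hpper hrper
            (by rw [hgcd]; omega)
          rw [hgcd] at H
          exact H
        · have hgcd' : Nat.gcd r p = g := by rw [Nat.gcd_comm, hgcd]
          have H := ih r p f m (by omega) hrpos (le_of_lt hc) hrper hpper
            (by rw [hgcd']; omega)
          rw [hgcd'] at H
          exact H
      exact ext_period f n m p g hgdvdp hgpos hp0 (by omega) (by omega) hp hpref i hi

/-- Fine and Wilf: if `w` has periods `p` and `q` and `|w| ≥ p + q - gcd(p,q)`,
then `gcd(p,q)` is also a period of `w`. -/
theorem fine_and_wilf {A : Type} [Inhabited A] (w : List A) (p q : ℕ)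
    (hp : IsPeriod w p) (hq : IsPeriod w q)
    (hlen : p + q - Nat.gcd p q ≤ w.length) :
    IsPeriod w (Nat.gcd p q) := by
  obtain ⟨hp1, hp2⟩ := hp
  obtain ⟨hq1, hq2⟩ := hq
  rcases Nat.eq_zero_or_pos p with rfl | hp0
  · simpa [IsPeriod, Nat.gcd] using And.intro hq1 hq2
  rcases Nat.eq_zero_or_pos q with rfl | hq0
  · rw [Nat.gcd_zero_right]
    exact ⟨hp1, hp2⟩
  set f : ℕ → A := fun j => w.getD j default with hf
  have key : ∀ i, i + Nat.gcd p q < w.length → f i = f (i + Nat.gcd p q) := by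
    rcases le_or_gt p q with hc | hc
    · exact fw_core (p + q) p q f w.length le_rfl hp0 hc hp2 hq2 hlen
    · have := fw_core (q + p) q p f w.length le_rfl hq0 (le_of_lt hc) hq2 hp2
        (by rw [Nat.gcd_comm]; omega)
      intro i hi
      rw [Nat.gcd_comm]
      exact this i (by rw [Nat.gcd_comm]; exact hi)
  constructor
  · have : Nat.gcd p q ≤ p := Nat.le_of_dvd hp0 (Nat.gcd_dvd_left p q)
    omega
  · exact key
end

section
/- Define words over {a,b,c} by p_0 = b, p_1 = bacacab, and p_{k+1} = p_k · aca · p_{k-1} · aca · p_k for k ≥ 1. Then for the morphism γ: a ↦ aca, b ↦ cab, c ↦ b, we have p_{k+1} = γ(ca p_k) for all k ≥ 1. -/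
inductive ABC : Type
  | a | b | c
  deriving DecidableEq, Inhabited, Repr

/-- The morphism γ : a ↦ aca, b ↦ cab, c ↦ b. -/
def gam : ABC → List ABC
  | .a => [.a, .c, .a]
  | .b => [.c, .a, .b]
  | .c => [.b]

/-- The palindromes p₀ = b, p₁ = bacacab, p_{k+1} = p_k aca p_{k-1} aca p_k. -/
def pseq : ℕ → List ABC
  | 0 => [.b]
  | 1 => [.b, .a, .c, .a, .c, .a, .b]
  | (k+2) => pseq (k+1) ++ [.a, .c, .a] ++ pseq k ++ [.a, .c, .a] ++ pseq (k+1)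

lemma step (x y z : List ABC)
    (hy : y = [ABC.b, ABC.a, ABC.c, ABC.a] ++ x.flatMap gam)
    (hz1 : z = y ++ [.a, .c, .a] ++ x ++ [.a, .c, .a] ++ y)
    (hz2 : z = [ABC.b, ABC.a, ABC.c, ABC.a] ++ y.flatMap gam) :
    z ++ [.a, .c, .a] ++ y ++ [.a, .c, .a] ++ z
      = [ABC.b, ABC.a, ABC.c, ABC.a] ++ z.flatMap gam := by
  have hgz : z.flatMap gam
      = y.flatMap gam ++ [.a,.c,.a,.b,.a,.c,.a] ++ x.flatMap gam
        ++ [.a,.c,.a,.b,.a,.c,.a] ++ y.flatMap gam := by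
    rw [hz1]; simp [List.flatMap_append, gam]
  set t := x.flatMap gam with ht
  set u := y.flatMap gam with hu
  rw [hgz, hz2, hy]
  simp

theorem pseq_aux : ∀ k : ℕ,
    pseq (k+2) = [ABC.b, ABC.a, ABC.c, ABC.a] ++ (pseq (k+1)).flatMap gam
  | 0 => by rfl
  | 1 => by rfl
  | (k+2) => by
    have h1 := pseq_aux k
    have h2 := pseq_aux (k+1)
    show pseq (k+3) ++ [.a,.c,.a] ++ pseq (k+2) ++ [.a,.c,.a] ++ pseq (k+3)
        = [ABC.b, ABC.a, ABC.c, ABC.a] ++ (pseq (k+3)).flatMap gam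
    exact step (pseq (k+1)) (pseq (k+2)) (pseq (k+3)) h1 rfl h2

/-- p_{k+1} = γ(ca p_k) for all k ≥ 1. -/
theorem pseq_succ_eq_gamma : ∀ k : ℕ, 1 ≤ k →
    pseq (k+1) = ([ABC.c, ABC.a] ++ pseq k).flatMap gam := by
  intro k hk
  obtain ⟨m, rfl⟩ := Nat.exists_eq_add_of_le hk
  rw [show 1 + m = m + 1 from by omega]
  have := pseq_aux m
  simpa [gam] using this
end

section
/- Let γ: a ↦ aca, b ↦ cab, c ↦ b and let x_γ be its fixed point starting with a. Then x_γ is palindromic, i.e., the language of x_γ contains palindromes of arbitrarily large length. -/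
/-- The prefix of length `n` of the infinite word `x`. -/
def pref {A : Type} (x : ℕ → A) (n : ℕ) : List A := (List.range n).map x

/-- The finite word `l` is a prefix of the infinite word `x`. -/
def IsPrefixOf {A : Type} [Inhabited A] (l : List A) (x : ℕ → A) : Prop :=
  ∀ i < l.length, l.getD i default = x i

/-- The image of the infinite word `w` under the morphism `f` is the infinite word `y`:
the image of every finite prefix of `w` is a prefix of `y`, and these images have
unbounded length. -/
def InfImage {A B : Type} [Inhabited B] (f : A → List B) (w : ℕ → A) (y : ℕ → B) : Prop :=
  (∀ n, IsPrefixOf ((pref w n).flatMap f) y) ∧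
  (∀ m, ∃ n, m ≤ ((pref w n).flatMap f).length)

/-- The morphism `f` fixes the infinite word `x`, i.e. `f(x) = x`. -/
def FixesWord {A : Type} [Inhabited A] (f : A → List A) (x : ℕ → A) : Prop :=
  InfImage f x x

/-- `l` is a factor of the infinite word `x`. -/
def IsFactorOf {A : Type} [Inhabited A] (l : List A) (x : ℕ → A) : Prop :=
  ∃ m, ∀ i < l.length, l.getD i default = x (m + i)

-- helper lemmas
lemma pref_eq {A : Type} [Inhabited A] (l : List A) (x : ℕ → A)
    (h : IsPrefixOf l x) : l = pref x l.length := by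
  apply List.ext_getElem (by simp [pref])
  intro i h1 h2
  have := h i h1
  rw [List.getD_eq_getElem l default h1] at this
  simpa [pref] using this

lemma flatMap_pref {A : Type} [Inhabited A] {f : A → List A} {x : ℕ → A}
    (hfix : FixesWord f x) (l : List A) (h : IsPrefixOf l x) :
    IsPrefixOf (l.flatMap f) x := by
  have he := pref_eq l x h
  have h2 := hfix.1 l.length
  rwa [← he] at h2

lemma prefix_mono {A : Type} [Inhabited A] {x : ℕ → A} {l₁ l₂ : List A}
    (h : IsPrefixOf (l₁ ++ l₂) x) : IsPrefixOf l₁ x := by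
  intro i hi
  have := h i (by simp; omega)
  rwa [List.getD_append _ _ _ _ hi] at this

lemma factor_of_prefix {A : Type} [Inhabited A] {x : ℕ → A} {l₁ l₂ : List A}
    (h : IsPrefixOf (l₁ ++ l₂) x) : IsFactorOf l₂ x := by
  refine ⟨l₁.length, fun i hi => ?_⟩
  have hlen : l₁.length + i < (l₁ ++ l₂).length := by simp; omega
  have := h (l₁.length + i) hlen
  rw [List.getD_eq_getElem _ _ hlen, List.getElem_append_right (by omega)] at this
  rw [List.getD_eq_getElem _ _ hi]
  simpa using this

lemma pseq_palindrome : ∀ k, (pseq k).reverse = pseq k := by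
  intro k
  induction k using Nat.twoStepInduction with
  | zero => decide
  | one => decide
  | more k ih1 ih2 => simp [pseq, List.reverse_append, ih1, ih2]

lemma pseq_length : ∀ k, k ≤ (pseq k).length := by
  intro k
  induction k using Nat.twoStepInduction with
  | zero => simp [pseq]
  | one => simp [pseq]
  | more k ih1 ih2 => simp [pseq] at *; omega

lemma gam_pseq : ∀ k, [ABC.b, .a, .c, .a] ++ (pseq k).flatMap gam = pseq (k+1) := by
  intro k
  induction k using Nat.twoStepInduction with
  | zero => decide
  | one => decide
  | more k ih1 ih2 =>
    show [ABC.b, .a, .c, .a] ++ (pseq (k+2)).flatMap gam = pseq (k+3)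
    rw [show pseq (k+2) = pseq (k+1) ++ [ABC.a, .c, .a] ++ pseq k ++ [ABC.a, .c, .a] ++ pseq (k+1) from rfl]
    rw [show pseq (k+3) = pseq (k+2) ++ [ABC.a, .c, .a] ++ pseq (k+1) ++ [ABC.a, .c, .a] ++ pseq (k+2) from rfl]
    simp only [List.flatMap_append, ← ih1, ← ih2]
    simp [gam]

lemma aca_pseq_prefix (x : ℕ → ABC) (h0 : x 0 = ABC.a) (hfix : FixesWord gam x) :
    ∀ k, IsPrefixOf ([ABC.a, .c, .a] ++ pseq k) x := by
  have h1 : IsPrefixOf [ABC.a] x := by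
    intro i hi
    simp at hi
    subst hi
    simpa using h0.symm
  have h2 : IsPrefixOf [ABC.a, .c, .a] x := by
    have := flatMap_pref hfix _ h1
    simpa [gam] using this
  intro k
  induction k with
  | zero =>
    have h3 := flatMap_pref hfix _ h2
    have : ([ABC.a, .c, .a] : List ABC).flatMap gam
        = ([ABC.a, .c, .a] ++ pseq 0) ++ [ABC.a, .c, .a] := by decide
    rw [this] at h3
    exact prefix_mono h3
  | succ k ih =>
    have h3 := flatMap_pref hfix _ ih
    have heq : ([ABC.a, .c, .a] ++ pseq k).flatMap gam = [ABC.a, .c, .a] ++ pseq (k+1) := by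
      rw [List.flatMap_append, ← gam_pseq k]
      simp [gam]
    rwa [heq] at h3


/-- The fixed point x_γ of γ starting with the letter a is palindromic: its language
contains palindromes of arbitrarily large length. -/
theorem fixed_point_gamma_palindromic (x : ℕ → ABC)
    (h0 : x 0 = ABC.a) (hfix : FixesWord gam x) :
    ∀ N : ℕ, ∃ l : List ABC, N ≤ l.length ∧ IsFactorOf l x ∧ l.reverse = l := by
  intro N
  exact ⟨pseq N, pseq_length N, factor_of_prefix (aca_pseq_prefix x h0 hfix N),
    pseq_palindrome N⟩
end

section
/- Let γ: a ↦ aca, b ↦ cab, c ↦ b, μ: x ↦ xy, y ↦ xxy, and π: x ↦ ac, y ↦ ab. Then γ ∘ π = π ∘ μ as morphisms from {x,y}* to {a,b,c}*. -/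
inductive XY : Type
  | x | y
  deriving DecidableEq, Inhabited, Repr

/-- The morphism μ : x ↦ xy, y ↦ xxy. -/
def mu : XY → List XY
  | .x => [.x, .y]
  | .y => [.x, .x, .y]

/-- The morphism π : x ↦ ac, y ↦ ab. -/
def pim : XY → List ABC
  | .x => [.a, .c]
  | .y => [.a, .b]

/-- γ ∘ π = π ∘ μ as morphisms from {x,y}* to {a,b,c}*. -/
theorem gamma_pi_eq_pi_mu : ∀ w : List XY,
    (w.flatMap pim).flatMap gam = (w.flatMap mu).flatMap pim := by
  intro w
  induction w with
  | nil => rfl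
  | cons h t ih =>
    simp only [List.flatMap_cons, List.flatMap_append, ih]
    cases h <;> rfl
end

section
/- Let γ: a ↦ aca, b ↦ cab, c ↦ b with fixed point x_γ starting with a, let μ: x ↦ xy, y ↦ xxy with fixed point w_μ starting with x, and π: x ↦ ac, y ↦ ab. Then x_γ = π(w_μ), and w_μ is the unique infinite word w over {x,y} with π(w) = x_γ. -/
lemma pref_length {A} (x : ℕ → A) (n) : (pref x n).length = n := by simp [pref]

lemma pref_succ {A} (x : ℕ → A) (n) : pref x (n+1) = pref x n ++ [x n] := by
  simp [pref, List.range_succ]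

lemma isPrefixOf_trans {A} [Inhabited A] {l l' : List A} {x : ℕ → A}
    (h : l <+: l') (h' : IsPrefixOf l' x) : IsPrefixOf l x := by
  obtain ⟨t, rfl⟩ := h
  intro i hi
  rw [← h' i (by simp; omega), List.getD_append _ _ _ _ hi]

lemma eq_pref {A} [Inhabited A] {l : List A} {x : ℕ → A} (h : IsPrefixOf l x) :
    l = pref x l.length := by
  apply List.ext_getElem (by simp [pref])
  intro i h1 h2
  have := h i h1
  rw [List.getD_eq_getElem _ _ h1] at this
  simp [pref, this]

lemma pref_prefix {A} (x : ℕ → A) {n m : ℕ} (h : n ≤ m) : pref x n <+: pref x m := by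
  have : pref x n = (pref x m).take n := by
    simp [pref, ← List.map_take, List.take_range, Nat.min_eq_left h]
  rw [this]; exact List.take_prefix _ _

lemma flatMap_prefix {A B} (f : A → List B) {l l' : List A} (h : l <+: l') :
    l.flatMap f <+: l'.flatMap f := by
  obtain ⟨t, rfl⟩ := h
  rw [List.flatMap_append]
  exact List.prefix_append _ _

lemma commXY (l : List XY) : (l.flatMap mu).flatMap pim = (l.flatMap pim).flatMap gam := by
  induction l with
  | nil => rfl
  | cons c t ih =>
    cases c <;> simp [List.flatMap_cons, List.flatMap_append, ih] <;> rfl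
def mk : ℕ → List XY
  | 0 => [.x]
  | k+1 => (mk k).flatMap mu

def gk : ℕ → List ABC
  | 0 => [.a, .c]
  | k+1 => (gk k).flatMap gam

lemma gk_eq (k : ℕ) : (mk k).flatMap pim = gk k := by
  induction k with
  | zero => rfl
  | succ k ih => rw [mk, gk, commXY, ih]

lemma flatMap_pim_length (l : List XY) : (l.flatMap pim).length = 2 * l.length := by
  induction l with
  | nil => rfl
  | cons c t ih => cases c <;> simp [List.flatMap_cons, ih, pim] <;> omega

lemma flatMap_mu_length (l : List XY) : 2 * l.length ≤ (l.flatMap mu).length := by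
  induction l with
  | nil => simp
  | cons c t ih =>
    cases c <;>
      simp only [List.flatMap_cons, List.length_append, mu, List.length_cons,
        List.length_nil] <;> omega

lemma mk_len (k : ℕ) : k + 1 ≤ (mk k).length := by
  induction k with
  | zero => simp [mk]
  | succ k ih =>
    have := flatMap_mu_length (mk k)
    rw [mk]; omega

lemma mk_prefix (w : ℕ → XY) (hw0 : w 0 = XY.x) (hw : FixesWord mu w) (k : ℕ) :
    IsPrefixOf (mk k) w := by
  induction k with
  | zero =>
    intro i hi
    simp [mk] at hi
    subst hi
    simpa [mk] using hw0.symm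
  | succ k ih =>
    have h := eq_pref ih
    rw [mk, h]
    exact hw.1 _

lemma x1 (x : ℕ → ABC) (h0 : x 0 = ABC.a) (hx : FixesWord gam x) : x 1 = ABC.c := by
  have hp : pref x 1 = [ABC.a] := by simp [pref, List.range_succ, h0]
  have h := hx.1 1 1 (by rw [hp]; decide)
  rw [hp] at h
  exact h.symm

lemma gk_prefix (x : ℕ → ABC) (h0 : x 0 = ABC.a) (hx : FixesWord gam x) (k : ℕ) :
    IsPrefixOf (gk k) x := by
  induction k with
  | zero =>
    intro i hi
    simp [gk] at hi
    interval_cases i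
    · simpa [gk] using h0.symm
    · simpa [gk] using (x1 x h0 hx).symm
  | succ k ih =>
    have h := eq_pref ih
    rw [gk, h]
    exact hx.1 _


/-- x_γ = π(w_μ), and w_μ is the unique infinite word over {x,y} whose image under π
is x_γ. -/
theorem x_gamma_eq_pi_w_mu (x : ℕ → ABC) (h0 : x 0 = ABC.a) (hx : FixesWord gam x)
    (w : ℕ → XY) (hw0 : w 0 = XY.x) (hw : FixesWord mu w) :
    InfImage pim w x ∧ ∀ w' : ℕ → XY, InfImage pim w' x → w' = w := by
  have part1 : InfImage pim w x := by
    constructor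
    · intro n
      have hmk := mk_prefix w hw0 hw n
      have hlen : n ≤ (mk n).length := le_trans (Nat.le_succ n) (mk_len n)
      have h1 : pref w n <+: mk n := by
        rw [eq_pref hmk]
        exact pref_prefix w hlen
      have h2 := flatMap_prefix pim h1
      rw [gk_eq] at h2
      exact isPrefixOf_trans h2 (gk_prefix x h0 hx n)
    · intro m
      exact ⟨m, by rw [flatMap_pim_length, pref_length]; omega⟩
  refine ⟨part1, ?_⟩
  have key : ∀ u : ℕ → XY, InfImage pim u x → ∀ i, (pim (u i)).getD 1 default = x (2*i+1) := by
    intro u hu i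
    have h := hu.1 (i+1) (2*i+1) (by rw [flatMap_pim_length, pref_length]; omega)
    rw [← h, pref_succ, List.flatMap_append]
    rw [List.getD_append_right _ _ _ _ (by rw [flatMap_pim_length, pref_length]; omega)]
    rw [flatMap_pim_length, pref_length]
    have : 2*i+1 - 2*i = 1 := by omega
    rw [this]
    simp [List.flatMap_cons]
  intro w' hw'
  funext i
  have h1 := key w' hw' i
  have h2 := key w part1 i
  cases hwi : w' i <;> cases hwj : w i <;>
    rw [hwi] at h1 <;> rw [hwj] at h2 <;> simp [pim] at h1 h2 <;> rw [← h1] at h2 <;>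
    first | rfl | exact absurd h2 (by decide)
end

section
/- Let γ: a ↦ aca, b ↦ cab, c ↦ b with fixed point x_γ, and let φ be a morphism on {a,b,c}* with φ(x_γ) = x_γ. Then |φ(a)|, |φ(b)|, |φ(c)| are all odd or all even. -/
/-! ### Auxiliary material -/

/-- Words that are concatenations of blocks `[a,b]` and `[a,c]`. -/
inductive Blk : List ABC → Prop
  | nil : Blk []
  | consb {w} : Blk w → Blk (ABC.a :: ABC.b :: w)
  | consc {w} : Blk w → Blk (ABC.a :: ABC.c :: w)

lemma Blk.append {u v : List ABC} (hu : Blk u) (hv : Blk v) : Blk (u ++ v) := by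
  induction hu with
  | nil => simpa
  | consb _ ih => exact .consb ih
  | consc _ ih => exact .consc ih

lemma Blk.gam_img {u : List ABC} (hu : Blk u) : Blk (u.flatMap gam) := by
  induction hu with
  | nil => simpa using Blk.nil
  | consb _ ih =>
      simp only [List.flatMap_cons, gam, List.cons_append, List.nil_append]
      exact .consc (.consc (.consb ih))
  | consc _ ih =>
      simp only [List.flatMap_cons, gam, List.cons_append, List.nil_append]
      exact .consc (.consb ih)

lemma Blk.len {u : List ABC} (hu : Blk u) : u.length % 2 = 0 := by
  induction hu with
  | nil => rfl
  | consb _ ih => simp only [List.length_cons]; omega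
  | consc _ ih => simp only [List.length_cons]; omega

lemma Blk.getD {u : List ABC} (hu : Blk u) :
    ∀ i < u.length, (u.getD i default = ABC.a ↔ i % 2 = 0) := by
  induction hu with
  | nil => intro i hi; simp at hi
  | consb _ ih =>
      rintro (_|_|i) hi
      · simp
      · simp
      · have h := ih i (by simp at hi; omega)
        simpa [List.getD_cons_succ, show (i+2) % 2 = i % 2 by omega] using h
  | consc _ ih =>
      rintro (_|_|i) hi
      · simp
      · simp
      · have h := ih i (by simp at hi; omega)
        simpa [List.getD_cons_succ, show (i+2) % 2 = i % 2 by omega] using h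

/-- Iterates of γ starting from `[a]`. -/
def wseq : ℕ → List ABC
  | 0 => [ABC.a]
  | k+1 => (wseq k).flatMap gam

lemma wseq_blk (k : ℕ) : ∃ u, Blk u ∧ wseq k = u ++ [ABC.a] := by
  induction k with
  | zero => exact ⟨[], .nil, rfl⟩
  | succ k ih =>
      obtain ⟨u, hu, he⟩ := ih
      refine ⟨u.flatMap gam ++ [ABC.a, ABC.c], hu.gam_img.append (.consc .nil), ?_⟩
      show (wseq k).flatMap gam = _
      rw [he]
      simp [gam]

lemma len_le_flatMap (l : List ABC) : l.length ≤ (l.flatMap gam).length := by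
  induction l with
  | nil => simp
  | cons y t ih =>
      rw [List.flatMap_cons, List.length_append, List.length_cons]
      have h1 : 1 ≤ (gam y).length := by cases y <;> simp [gam]
      omega

lemma wseq_len (k : ℕ) : k < (wseq k).length := by
  induction k with
  | zero => simp [wseq]
  | succ k ih =>
      obtain ⟨u, hu, he⟩ := wseq_blk k
      have h1 : wseq (k+1) = u.flatMap gam ++ [ABC.a, ABC.c, ABC.a] := by
        show (wseq k).flatMap gam = _
        rw [he]; simp [gam]
      have h2 := len_le_flatMap u
      have h3 : (wseq k).length = u.length + 1 := by rw [he]; simp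
      rw [h1, List.length_append]
      simp only [List.length_cons, List.length_nil]
      omega

lemma isPrefixOf_pref_eq {l : List ABC} {x : ℕ → ABC} (h : IsPrefixOf l x) :
    pref x l.length = l := by
  apply List.ext_getElem (by simp [pref])
  intro i h1 h2
  have h3 := h i h2
  rw [List.getD_eq_getElem _ _ h2] at h3
  simp only [pref, List.getElem_map, List.getElem_range]
  exact h3.symm

lemma first_letter {x : ℕ → ABC} {L : List ABC} (hpre : IsPrefixOf L x)
    (u v r : List ABC) (hL : L = u ++ (v ++ r)) (hv : v ≠ []) :
    v.getD 0 default = x u.length := by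
  have hvl : 0 < v.length := List.length_pos_iff.2 hv
  have hlen : u.length < L.length := by
    rw [hL]; simp only [List.length_append]; omega
  have h := hpre u.length hlen
  rw [hL, List.getD_append_right _ _ _ _ le_rfl, Nat.sub_self,
      List.getD_append _ _ _ _ hvl] at h
  exact h

/-- If φ fixes the fixed point x_γ of γ, then |φ(a)|, |φ(b)|, |φ(c)| are all odd or
all even. -/
theorem lengths_same_parity (x : ℕ → ABC) (h0 : x 0 = ABC.a) (hx : FixesWord gam x)
    (φ : ABC → List ABC) (hφ : FixesWord φ x) :
    (φ ABC.a).length % 2 = (φ ABC.b).length % 2 ∧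
    (φ ABC.b).length % 2 = (φ ABC.c).length % 2 := by
  -- every wseq k is a prefix of x
  have hw : ∀ k, IsPrefixOf (wseq k) x := by
    intro k
    induction k with
    | zero =>
        intro i hi
        have : i = 0 := by simpa [wseq] using hi
        subst this
        simpa [wseq] using h0.symm
    | succ k ih =>
        have h := hx.1 (wseq k).length
        rwa [isPrefixOf_pref_eq ih] at h
  -- parity of x
  have xpar : ∀ n, (x n = ABC.a ↔ n % 2 = 0) := by
    intro n
    obtain ⟨u, hu, he⟩ := wseq_blk n
    have hn : n < (wseq n).length := wseq_len n
    have hxv : x n = (wseq n).getD n default := (hw n n hn).symm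
    rw [he] at hxv hn
    simp only [List.length_append, List.length_cons, List.length_nil] at hn
    rcases lt_or_ge n u.length with h | h
    · rw [List.getD_append _ _ _ _ h] at hxv
      rw [hxv]; exact hu.getD n h
    · have hne : n = u.length := by omega
      subst hne
      rw [List.getD_append_right _ _ _ _ h, Nat.sub_self,
        show ([ABC.a].getD 0 default) = ABC.a from rfl] at hxv
      constructor
      · intro _; exact hu.len
      · intro _; exact hxv
  have parity_eq : ∀ m m', x m = x m' → m % 2 = m' % 2 := by
    intro m m' h
    by_cases ha : x m = ABC.a
    · have h1 := (xpar m).1 ha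
      have h2 := (xpar m').1 (h ▸ ha)
      omega
    · have h1 : ¬ m % 2 = 0 := fun hh => ha ((xpar m).2 hh)
      have h2 : ¬ m' % 2 = 0 := fun hh => ha (h ▸ (xpar m').2 hh)
      omega
  -- the explicit values of x on [0, 10)
  have h3 := hw 3
  have e3 : wseq 3 = [ABC.a, ABC.c, ABC.a, ABC.b, ABC.a, ABC.c, ABC.a, ABC.c, ABC.a,
      ABC.b, ABC.a, ABC.c, ABC.a, ABC.b, ABC.a, ABC.c, ABC.a] := by decide
  rw [e3] at h3
  have hx1 : x 1 = ABC.c := (h3 1 (by decide)).symm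
  have hx2 : x 2 = ABC.a := (h3 2 (by decide)).symm
  have hx3 : x 3 = ABC.b := (h3 3 (by decide)).symm
  have hx4 : x 4 = ABC.a := (h3 4 (by decide)).symm
  have hx5 : x 5 = ABC.c := (h3 5 (by decide)).symm
  have hx6 : x 6 = ABC.a := (h3 6 (by decide)).symm
  have hx7 : x 7 = ABC.c := (h3 7 (by decide)).symm
  have hx8 : x 8 = ABC.a := (h3 8 (by decide)).symm
  have hx9 : x 9 = ABC.b := (h3 9 (by decide)).symm
  -- the φ-image of the length-10 prefix is a prefix of x
  have hp := hφ.1 10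
  have e10 : pref x 10 =
      [ABC.a, ABC.c, ABC.a, ABC.b, ABC.a, ABC.c, ABC.a, ABC.c, ABC.a, ABC.b] := by
    simp [pref, List.range_succ, h0, hx1, hx2, hx3, hx4, hx5, hx6, hx7, hx8, hx9]
  rw [e10] at hp
  simp only [List.flatMap_cons, List.flatMap_nil, List.append_nil] at hp
  set L := φ ABC.a ++ (φ ABC.c ++ (φ ABC.a ++ (φ ABC.b ++ (φ ABC.a ++ (φ ABC.c ++
      (φ ABC.a ++ (φ ABC.c ++ (φ ABC.a ++ φ ABC.b)))))))) with hLdef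
  -- parity facts
  have Ha : φ ABC.a ≠ [] →
      ((φ ABC.a).length + (φ ABC.c).length) % 2 = 0 := by
    intro h
    have o1 := first_letter hp [] (φ ABC.a) _ rfl h
    have o2 := first_letter hp (φ ABC.a ++ φ ABC.c) (φ ABC.a)
      (φ ABC.b ++ (φ ABC.a ++ (φ ABC.c ++ (φ ABC.a ++ (φ ABC.c ++ (φ ABC.a ++ φ ABC.b))))))
      (by rw [hLdef]; simp only [List.append_assoc]) h
    have h2 := parity_eq _ _ (o2.symm.trans o1)
    simp only [List.length_append, List.length_nil] at h2
    omega
  have Hc : φ ABC.c ≠ [] →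
      (φ ABC.a).length % 2 =
        ((φ ABC.a).length + (φ ABC.c).length + (φ ABC.a).length + (φ ABC.b).length
          + (φ ABC.a).length) % 2 := by
    intro h
    have o1 := first_letter hp (φ ABC.a) (φ ABC.c)
      (φ ABC.a ++ (φ ABC.b ++ (φ ABC.a ++ (φ ABC.c ++ (φ ABC.a ++ (φ ABC.c ++ (φ ABC.a ++ φ ABC.b)))))))
      (by rw [hLdef]) h
    have o2 := first_letter hp
      (φ ABC.a ++ φ ABC.c ++ φ ABC.a ++ φ ABC.b ++ φ ABC.a) (φ ABC.c)
      (φ ABC.a ++ (φ ABC.c ++ (φ ABC.a ++ φ ABC.b)))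
      (by rw [hLdef]; simp only [List.append_assoc]) h
    have h2 := parity_eq _ _ (o1.symm.trans o2)
    simp only [List.length_append, List.length_nil] at h2
    omega
  have Hb : φ ABC.b ≠ [] →
      ((φ ABC.a).length + (φ ABC.c).length + (φ ABC.a).length) % 2 =
        ((φ ABC.a).length + (φ ABC.c).length + (φ ABC.a).length + (φ ABC.b).length
          + (φ ABC.a).length + (φ ABC.c).length + (φ ABC.a).length
          + (φ ABC.c).length + (φ ABC.a).length) % 2 := by
    intro h
    have o1 := first_letter hp (φ ABC.a ++ φ ABC.c ++ φ ABC.a) (φ ABC.b)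
      (φ ABC.a ++ (φ ABC.c ++ (φ ABC.a ++ (φ ABC.c ++ (φ ABC.a ++ φ ABC.b)))))
      (by rw [hLdef]; simp only [List.append_assoc]) h
    have o2 := first_letter hp
      (φ ABC.a ++ φ ABC.c ++ φ ABC.a ++ φ ABC.b ++ φ ABC.a ++ φ ABC.c ++ φ ABC.a
        ++ φ ABC.c ++ φ ABC.a) (φ ABC.b) []
      (by rw [hLdef]; simp only [List.append_assoc, List.append_nil]) h
    have h2 := parity_eq _ _ (o1.symm.trans o2)
    simp only [List.length_append, List.length_nil] at h2
    omega
  -- finish by case analysis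
  by_cases ea : φ ABC.a = []
  · by_cases eb : φ ABC.b = []
    · by_cases ec : φ ABC.c = []
      · simp [ea, eb, ec]
      · have := Hc ec; simp [ea, eb] at this ⊢; omega
    · have hb := Hb eb
      by_cases ec : φ ABC.c = []
      · simp [ea, ec] at hb ⊢; omega
      · have hc := Hc ec
        simp [ea] at hb hc ⊢; omega
  · have ha := Ha ea
    by_cases eb : φ ABC.b = []
    · by_cases ec : φ ABC.c = []
      · simp [eb, ec] at ha ⊢; omega
      · have hc := Hc ec; simp [eb] at hc ⊢; omega
    · have hb := Hb eb
      by_cases ec : φ ABC.c = []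
      · simp [ec] at ha hb ⊢; omega
      · have hc := Hc ec; omega
end

section
/- For the morphism μ: x ↦ xy, y ↦ xxy and every word w over {x,y}, μ(w) is primitive if and only if w is primitive. -/
/-- Words in the code star {xy, xxy}*. -/
inductive InC : List XY → Prop
  | nil : InC []
  | cx (s : List XY) : InC s → InC (.x :: .y :: s)
  | cy (s : List XY) : InC s → InC (.x :: .x :: .y :: s)

lemma flatMap_InC : ∀ w : List XY, InC (w.flatMap mu)
  | [] => InC.nil
  | .x :: w => InC.cx _ (flatMap_InC w)
  | .y :: w => InC.cy _ (flatMap_InC w)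

lemma InC_decode : ∀ s : List XY, InC s → ∃ u : List XY, u.flatMap mu = s := by
  intro s h
  induction h with
  | nil => exact ⟨[], rfl⟩
  | cx s _ ih => obtain ⟨u, hu⟩ := ih; exact ⟨.x :: u, by simp [mu, hu]⟩
  | cy s _ ih => obtain ⟨u, hu⟩ := ih; exact ⟨.y :: u, by simp [mu, hu]⟩

lemma mu_inj : ∀ w w' : List XY, w.flatMap mu = w'.flatMap mu → w = w'
  | [], [], _ => rfl
  | [], a :: w', h => by cases a <;> simp [mu] at h
  | a :: w, [], h => by cases a <;> simp [mu] at h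
  | a :: w, b :: w', h => by
    cases a <;> cases b <;> simp [mu] at h <;> rw [mu_inj w w' h]

lemma mu_pow (u : List XY) (p : ℕ) :
    ((List.replicate p u).flatten).flatMap mu
      = (List.replicate p (u.flatMap mu)).flatten := by
  induction p with
  | zero => rfl
  | succ n ih => simp [List.replicate_succ, ih]

lemma InC_lastY : ∀ s : List XY, InC s → ∀ l, s.getLast? = some l → l = .y := by
  intro s h
  induction h with
  | nil => intro l hl; simp at hl
  | cx s _ ih =>
      intro l hl
      rw [List.getLast?_cons_cons] at hl
      cases s with
      | nil => simpa using hl.symm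
      | cons c s' => rw [List.getLast?_cons_cons] at hl; exact ih l hl
  | cy s _ ih =>
      intro l hl
      rw [List.getLast?_cons_cons, List.getLast?_cons_cons] at hl
      cases s with
      | nil => simpa using hl.symm
      | cons c s' => rw [List.getLast?_cons_cons] at hl; exact ih l hl

lemma flatten_replicate_last (v : List XY) (hv : v ≠ []) :
    ∀ p : ℕ, 1 ≤ p → ((List.replicate p v).flatten).getLast? = v.getLast? := by
  intro p
  induction p with
  | zero => intro h; omega
  | succ n ih =>
      intro _
      rw [List.replicate_succ, List.flatten_cons]
      cases n with
      | zero => simp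
      | succ m =>
          rw [List.getLast?_append, ih (by omega)]
          obtain ⟨a, ha⟩ := Option.isSome_iff_exists.mp (List.getLast?_isSome.mpr hv)
          simp [ha]

/-- Synchronization: every `y` ends a code block. -/
lemma InC_split : ∀ s t : List XY, InC (s ++ .y :: t) → InC (s ++ [.y]) ∧ InC t
  | [], t, h => by cases h
  | .y :: s, t, h => by cases h
  | [.x], t, h => by
      cases h with
      | cx _ h' => exact ⟨InC.cx _ InC.nil, h'⟩
  | .x :: .y :: s, t, h => by
      simp only [List.cons_append] at h
      cases h with
      | cx _ h' =>
          obtain ⟨h1, h2⟩ := InC_split s t h'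
          exact ⟨InC.cx _ h1, h2⟩
  | [.x, .x], t, h => by
      cases h with
      | cy _ h' => exact ⟨InC.cy _ InC.nil, h'⟩
  | .x :: .x :: .y :: s, t, h => by
      simp only [List.cons_append] at h
      cases h with
      | cy _ h' =>
          obtain ⟨h1, h2⟩ := InC_split s t h'
          exact ⟨InC.cy _ h1, h2⟩
  | .x :: .x :: .x :: s, t, h => by
      simp only [List.cons_append] at h
      cases h

/-- μ(w) is primitive iff w is primitive. -/
theorem mu_primitive_iff : ∀ w : List XY, Primitive (w.flatMap mu) ↔ Primitive w := by
  intro w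
  unfold Primitive
  constructor
  · rintro h ⟨u, p, hp, hw⟩
    exact h ⟨u.flatMap mu, p, hp, by rw [hw, mu_pow]⟩
  · rintro h ⟨v, p, hp, hv⟩
    by_cases hvnil : v = []
    · subst hvnil
      have hw : w = [] := by
        have : w.flatMap mu = [] := by simpa using hv
        cases w with
        | nil => rfl
        | cons a w => cases a <;> simp [mu] at this
      exact h ⟨[], p, hp, by simp [hw]⟩
    · have hInC : InC ((List.replicate p v).flatten) := hv ▸ flatMap_InC w
      obtain ⟨s, l, hsl⟩ := (List.eq_nil_or_concat v).resolve_left hvnil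
      rw [List.concat_eq_append] at hsl
      have hlast : v.getLast? = some l := by rw [hsl]; simp
      have hl : l = .y := by
        apply InC_lastY _ hInC
        rw [flatten_replicate_last v hvnil p (by omega)]
        exact hlast
      subst hl
      obtain ⟨n, rfl⟩ : ∃ n, p = n + 2 := ⟨p - 2, by omega⟩
      have hsplit : InC (s ++ .y :: (List.replicate (n + 1) v).flatten) := by
        have : (List.replicate (n + 2) v).flatten
            = s ++ .y :: (List.replicate (n + 1) v).flatten := by
          rw [List.replicate_succ, List.flatten_cons, hsl]
          simp
        rwa [this] at hInC
      obtain ⟨hv1, _⟩ := InC_split s _ hsplit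
      rw [← hsl] at hv1
      obtain ⟨u, hu⟩ := InC_decode v hv1
      refine h ⟨u, n + 2, by omega, ?_⟩
      apply mu_inj
      rw [hv, mu_pow, hu]
end

section
/- For the morphism γ: a ↦ aca, b ↦ cab, c ↦ b and every word w that is a product of the blocks ab and ac (i.e., w ∈ {ab, ac}*), γ(w) is primitive if and only if w is primitive. -/
lemma gam_inj : ∀ xs ys : List ABC, xs.flatMap gam = ys.flatMap gam → xs = ys := by
  intro xs
  induction xs with
  | nil =>
    intro ys h
    cases ys with
    | nil => rfl
    | cons y yt => cases y <;> simp [gam] at h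
  | cons x xt ih =>
    intro ys h
    cases ys with
    | nil => cases x <;> simp [gam] at h
    | cons y yt =>
      cases x <;> cases y <;> simp [gam] at h ⊢ <;> exact ih _ h

lemma flatMap_flatten (L : List (List ABC)) :
    (L.flatten).flatMap gam = (L.map (fun u => u.flatMap gam)).flatten := by
  induction L <;> simp_all

lemma ends_b_prefix (blk x c' : List ABC)
    (hblk : blk = [ABC.a, .c, .a, .c, .a, .b] ∨ blk = [ABC.a, .c, .a, .b])
    (hc1 : blk = x ++ c') (hb : x.getLast? = some ABC.b) : x = blk ∧ c' = [] := by
  have hx : x = blk.take x.length := by rw [hc1, List.take_left]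
  have hlen : x.length ≤ 6 := by
    rcases hblk with rfl | rfl <;> (have := congrArg List.length hc1; simp at this; omega)
  obtain ⟨n, hn⟩ : ∃ n, x.length = n := ⟨_, rfl⟩
  rw [hn] at hx hlen
  rcases hblk with rfl | rfl <;> interval_cases n <;>
      simp only [List.take_succ_cons, List.take_zero, List.take_nil] at hx <;> subst hx <;>
      first
        | exact ⟨rfl, by simpa using hc1⟩
        | (exfalso; simp at hb)

lemma split_lemma : ∀ (L : List (List ABC)),
    (∀ u ∈ L, u = [ABC.a, .c, .a, .c, .a, .b] ∨ u = [ABC.a, .c, .a, .b]) →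
    ∀ x y : List ABC, L.flatten = x ++ y → (x = [] ∨ x.getLast? = some ABC.b) →
    ∃ L1 L2, L = L1 ++ L2 ∧ x = L1.flatten ∧ y = L2.flatten := by
  intro L
  induction L with
  | nil =>
    intro _ x y h _
    refine ⟨[], [], rfl, ?_, ?_⟩
    · simpa using (List.append_eq_nil_iff.mp h.symm).1
    · simpa using (List.append_eq_nil_iff.mp h.symm).2
  | cons blk rest ih =>
    intro hgood x y h hx
    rcases hx with rfl | hb
    · exact ⟨[], blk :: rest, rfl, rfl, by simpa using h.symm⟩
    rw [List.flatten_cons] at h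
    rcases List.append_eq_append_iff.mp h with ⟨a', ha1, ha2⟩ | ⟨c', hc1, hc2⟩
    · -- ha1 : x = blk ++ a', ha2 : rest.flatten = a' ++ y
      have hcond : a' = [] ∨ a'.getLast? = some ABC.b := by
        rcases eq_or_ne a' [] with rfl | hne
        · exact Or.inl rfl
        · right
          obtain ⟨z, hz⟩ := Option.isSome_iff_exists.mp (List.getLast?_isSome.mpr hne)
          rw [ha1, List.getLast?_append, hz] at hb
          simp only [Option.or] at hb
          rw [hz, hb]
      obtain ⟨L1, L2, hL, hx1, hy1⟩ := ih (fun u hu => hgood u (by simp [hu])) a' y ha2 hcond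
      exact ⟨blk :: L1, L2, by rw [hL]; rfl, by simp [ha1, hx1], hy1⟩
    · -- hc1 : blk = x ++ c', hc2 : y = c' ++ rest.flatten
      obtain ⟨rfl, rfl⟩ := ends_b_prefix blk x c' (hgood blk (by simp)) hc1 hb
      exact ⟨[x], rest, rfl, by simp, by simpa using hc2⟩

lemma blocks_ends_b : ∀ (L : List (List ABC)),
    (∀ u ∈ L, u = [ABC.a, .c, .a, .c, .a, .b] ∨ u = [ABC.a, .c, .a, .b]) →
    L ≠ [] → L.flatten.getLast? = some ABC.b := by
  intro L
  induction L with
  | nil => simp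
  | cons blk rest ih =>
    intro hgood _
    rcases eq_or_ne rest [] with rfl | hne
    · rcases hgood blk (by simp) with rfl | rfl <;> simp
    · rw [List.flatten_cons, List.getLast?_append,
        ih (fun u hu => hgood u (by simp [hu])) hne]
      simp [Option.or]

lemma blocks_decode : ∀ (L : List (List ABC)),
    (∀ u ∈ L, u = [ABC.a, .c, .a, .c, .a, .b] ∨ u = [ABC.a, .c, .a, .b]) →
    ∃ u : List ABC, L.flatten = u.flatMap gam := by
  intro L
  induction L with
  | nil => exact fun _ => ⟨[], by simp⟩
  | cons blk rest ih =>
    intro hgood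
    obtain ⟨u, hu⟩ := ih (fun u hu => hgood u (by simp [hu]))
    rcases hgood blk (by simp) with rfl | rfl
    · exact ⟨.a :: .b :: u, by simp [gam, hu]⟩
    · exact ⟨.a :: .c :: u, by simp [gam, hu]⟩

/-- For every word w that is a product of the blocks ab and ac, γ(w) is primitive
iff w is primitive. -/
theorem gamma_primitive_iff : ∀ w : List ABC,
    (∃ l : List (List ABC),
        (∀ u ∈ l, u = [ABC.a, ABC.b] ∨ u = [ABC.a, ABC.c]) ∧ w = l.flatten) →
    (Primitive (w.flatMap gam) ↔ Primitive w) := by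
  rintro w ⟨l, hl, rfl⟩
  rcases eq_or_ne l.flatten [] with hw | hw
  · rw [hw]; simp
  · unfold Primitive
    rw [not_iff_not]
    constructor
    · rintro ⟨v, p, hp, hv⟩
      have hmapgood : ∀ u ∈ l.map (fun u => u.flatMap gam),
          u = [ABC.a, .c, .a, .c, .a, .b] ∨ u = [ABC.a, .c, .a, .b] := by
        intro u hu
        simp only [List.mem_map] at hu
        obtain ⟨z, hz, rfl⟩ := hu
        rcases hl z hz with rfl | rfl
        · left; simp [gam]
        · right; simp [gam]
      have hLne : l ≠ [] := by rintro rfl; simp at hw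
      have hsne : l.flatten.flatMap gam ≠ [] := by
        intro h0
        obtain ⟨x, hx⟩ := List.exists_mem_of_ne_nil l.flatten hw
        exact (by cases x <;> simp [gam] : gam x ≠ [])
          (List.flatMap_eq_nil_iff.mp h0 x hx)
      have hvne : v ≠ [] := by
        rintro rfl
        exact hsne (by simpa using hv)
      have hslast : (l.flatten.flatMap gam).getLast? = some ABC.b := by
        rw [flatMap_flatten]
        exact blocks_ends_b _ hmapgood (by simp [hLne])
      have hvlast : v.getLast? = some ABC.b := by
        have h2 : (List.replicate p v).flatten = (List.replicate (p-1) v).flatten ++ v := by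
          conv_lhs => rw [show p = (p-1)+1 by omega]
          rw [List.replicate_succ', List.flatten_append]
          simp
        rw [hv, h2, List.getLast?_append] at hslast
        obtain ⟨z, hz⟩ := Option.isSome_iff_exists.mp (List.getLast?_isSome.mpr hvne)
        rw [hz] at hslast
        simp only [Option.or] at hslast
        rw [hz, hslast]
      have hsplit : (l.map (fun u => u.flatMap gam)).flatten
          = v ++ (List.replicate (p-1) v).flatten := by
        rw [← flatMap_flatten, hv]
        conv_lhs => rw [show p = 1 + (p-1) by omega]
        rw [List.replicate_add, List.flatten_append]
        simp
      obtain ⟨L1, L2, hL, hvL1, _⟩ :=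
        split_lemma _ hmapgood v _ hsplit (Or.inr hvlast)
      obtain ⟨u, huv⟩ := blocks_decode L1
        (fun u hu => hmapgood u (by rw [hL]; exact List.mem_append_left _ hu))
      refine ⟨u, p, hp, gam_inj _ _ ?_⟩
      rw [hv, flatMap_flatten, List.map_replicate, ← huv, ← hvL1]
    · rintro ⟨u, p, hp, hu⟩
      exact ⟨u.flatMap gam, p, hp, by rw [hu, flatMap_flatten, List.map_replicate]⟩
end
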